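/- Assume the fourth-moment asymptotic for ζ: there are κ ∈ (0,1), a real polynomial P of degree 4, and C₀ > 0 such that |(1/T)·∫_0^T |ζ(1/2+iu)|⁴ du − P(log T)| ≤ C₀·T^{−κ} for all T ≥ 2. Then there is a constant C > 0 (depending only on κ, P, C₀) such that for all t ≥ 10 and all real A with 1 ≤ A ≤ t: ∫_A^{2A} |ζ(1/2+i(2t−r))|²·|ζ(1/2+ir)|² dr ≤ C·(log t)⁴·(A + t^{(1−κ)/2}·A^{1/2}). -/

import Mathlib

open MeasureTheory intervalIntegral Real Set

/-! The hypothesis says `∫₀ᵀ |ζ(1/2 + iu)|⁴ du = T P(log T) + O(T^{1-κ})`. The main term has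
derivative `P(log x) + P'(log x) = O((log t)⁴)` on `[2, 2t]`, so differencing gives
`∫ₐᵇ |ζ|⁴ ≪ (log t)⁴ ((b - a) + b^{1-κ})` for `0 ≤ a ≤ b ≤ 2t`. By Cauchy–Schwarz the product
integral over `[A, 2A]` is at most the geometric mean of the fourth moments over `[A, 2A]`, which is
`≪ (log t)⁴ A`, and over `[2t - 2A, 2t - A]`, which is `≪ (log t)⁴ (A + t^{1-κ})`. -/

theorem continuous_norm_riemannZeta_critical_line :
    Continuous fun u : ℝ => ‖riemannZeta (1 / 2 + Complex.I * u)‖ := by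
  refine continuous_iff_continuousAt.2 fun u => ?_
  have hne : (1 / 2 : ℂ) + Complex.I * u ≠ 1 := fun h => by
    simpa using congrArg Complex.re h
  have hline : ContinuousAt (fun u : ℝ => (1 / 2 : ℂ) + Complex.I * u) u := by fun_prop
  exact ((differentiableAt_riemannZeta hne).continuousAt.comp (x := u) hline).norm

namespace Polynomial

theorem abs_eval_le_sum_abs_coeff_mul (p : Polynomial ℝ) {n : ℕ} (hn : p.natDegree ≤ n) (y : ℝ) :
    |p.eval y| ≤ (∑ i ∈ Finset.range (n + 1), |p.coeff i|) * (1 + |y|) ^ n := by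
  rw [eval_eq_sum_range' (Nat.lt_succ_of_le hn), Finset.sum_mul]
  refine (Finset.abs_sum_le_sum_abs _ _).trans (Finset.sum_le_sum fun i hi => ?_)
  rw [abs_mul, abs_pow]
  have hy := abs_nonneg y
  gcongr
  calc |y| ^ i ≤ (1 + |y|) ^ i := by gcongr; linarith
    _ ≤ (1 + |y|) ^ n :=
      pow_le_pow_right₀ (by linarith) (Nat.lt_succ_iff.mp (Finset.mem_range.mp hi))

theorem abs_eval_log_le (p : Polynomial ℝ) {n : ℕ} (hn : p.natDegree ≤ n) {t x : ℝ}
    (ht : 1 ≤ log t) (hx : x ∈ Icc 1 (2 * t)) :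
    |p.eval (log x)| ≤ (∑ i ∈ Finset.range (n + 1), |p.coeff i|) * 3 ^ n * log t ^ n := by
  have hlog : 1 + |log x| ≤ 3 * log t := by
    have ht0 : 0 < t := by linarith [hx.1, hx.2]
    rw [abs_of_nonneg (log_nonneg hx.1)]
    have := log_le_log (by linarith [hx.1]) hx.2
    rw [log_mul two_ne_zero ht0.ne'] at this
    linarith [log_two_lt_d9]
  calc |p.eval (log x)| ≤ (∑ i ∈ Finset.range (n + 1), |p.coeff i|) * (1 + |log x|) ^ n :=
        p.abs_eval_le_sum_abs_coeff_mul hn _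
    _ ≤ (∑ i ∈ Finset.range (n + 1), |p.coeff i|) * (3 * log t) ^ n := by
        gcongr
    _ = _ := by ring

theorem hasDerivAt_mul_eval_log (p : Polynomial ℝ) {x : ℝ} (hx : 0 < x) :
    HasDerivAt (fun x => x * p.eval (log x)) (p.eval (log x) + p.derivative.eval (log x)) x :=
  ((hasDerivAt_id' x).mul ((p.hasDerivAt (log x)).comp x (hasDerivAt_log hx.ne'))).congr_deriv
    (by field_simp; rfl)

end Polynomial

def HasMomentAsymptotic (f : ℝ → ℝ) (P : Polynomial ℝ) (κ C₀ : ℝ) : Prop :=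
  ∀ T : ℝ, 2 ≤ T → |(1 / T) * (∫ u in (0:ℝ)..T, f u) - P.eval (log T)| ≤ C₀ * T ^ (-κ)

namespace HasMomentAsymptotic

variable {f : ℝ → ℝ} {P : Polynomial ℝ} {κ C₀ : ℝ}

theorem const_nonneg (h : HasMomentAsymptotic f P κ C₀) : 0 ≤ C₀ :=
  nonneg_of_mul_nonneg_left ((abs_nonneg _).trans (h 2 le_rfl)) (by positivity)

theorem abs_integral_sub_le (h : HasMomentAsymptotic f P κ C₀) {T : ℝ} (hT : 2 ≤ T) :
    |(∫ u in (0:ℝ)..T, f u) - T * P.eval (log T)| ≤ C₀ * T ^ (1 - κ) := by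
  have hT0 : 0 < T := by linarith
  have hscale : (∫ u in (0:ℝ)..T, f u) - T * P.eval (log T)
      = T * ((1 / T) * (∫ u in (0:ℝ)..T, f u) - P.eval (log T)) := by
    field_simp
  rw [hscale, abs_mul, abs_of_pos hT0]
  calc T * |(1 / T) * (∫ u in (0:ℝ)..T, f u) - P.eval (log T)| ≤ T * (C₀ * T ^ (-κ)) := by
        gcongr; exact h T hT
    _ = C₀ * T ^ (1 - κ) := by rw [sub_eq_add_neg, rpow_add hT0, rpow_one]; ring

theorem integral_le_of_two_le (h : HasMomentAsymptotic f P κ C₀)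
    (hf : ∀ a b, IntervalIntegrable f volume a b) {a b D : ℝ} (ha : 2 ≤ a) (hab : a ≤ b)
    (hD : ∀ x ∈ Icc a b, |P.eval (log x) + P.derivative.eval (log x)| ≤ D) :
    ∫ u in a..b, f u ≤ D * (b - a) + C₀ * (a ^ (1 - κ) + b ^ (1 - κ)) := by
  have hmain : b * P.eval (log b) - a * P.eval (log a) ≤ D * (b - a) := by
    have := norm_image_sub_le_of_norm_deriv_le_segment'
      (fun x hx => (P.hasDerivAt_mul_eval_log (by linarith [hx.1])).hasDerivWithinAt)
      (fun x hx => hD x (Ico_subset_Icc_self hx)) b ⟨hab, le_rfl⟩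
    exact (le_abs_self _).trans this
  have hb := abs_le.1 (h.abs_integral_sub_le (ha.trans hab))
  have ha := abs_le.1 (h.abs_integral_sub_le ha)
  rw [← integral_interval_sub_left (hf 0 b) (hf 0 a)]
  linarith

theorem integral_le (h : HasMomentAsymptotic f P κ C₀)
    (hf : ∀ a b, IntervalIntegrable f volume a b) (hf0 : ∀ x, 0 ≤ f x) (hκ : κ ≤ 1)
    {a b D : ℝ} (ha : 0 ≤ a) (hab : a ≤ b) (hb : 2 ≤ b)
    (hD : ∀ x ∈ Icc 2 b, |P.eval (log x) + P.derivative.eval (log x)| ≤ D) :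
    ∫ u in a..b, f u ≤ D * (b - a) + ((∫ u in (0:ℝ)..2, f u) + 2 * C₀) * b ^ (1 - κ) := by
  have hC₀ := h.const_nonneg
  have hM : 0 ≤ ∫ u in (0:ℝ)..2, f u := integral_nonneg zero_le_two fun x _ => hf0 x
  have hbκ : 1 ≤ b ^ (1 - κ) := one_le_rpow (by linarith) (by linarith)
  rcases le_total 2 a with h2a | ha2
  · have hab' : a ^ (1 - κ) ≤ b ^ (1 - κ) := rpow_le_rpow (by linarith) hab (by linarith)
    have := h.integral_le_of_two_le hf h2a hab fun x hx => hD x ⟨h2a.trans hx.1, hx.2⟩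
    nlinarith
  · have hD0 : 0 ≤ D := (abs_nonneg _).trans (hD 2 ⟨le_rfl, hb⟩)
    have h2b : (2 : ℝ) ^ (1 - κ) ≤ b ^ (1 - κ) := rpow_le_rpow zero_le_two hb (by linarith)
    have hleft : ∫ u in a..2, f u ≤ ∫ u in (0:ℝ)..2, f u :=
      integral_mono_interval ha ha2 le_rfl (Filter.Eventually.of_forall hf0) (hf 0 2)
    have hright := h.integral_le_of_two_le hf le_rfl hb fun x hx => hD x hx
    rw [← integral_add_adjacent_intervals (hf a 2) (hf 2 b)]
    nlinarith

theorem exists_integral_le (h : HasMomentAsymptotic f P κ C₀)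
    (hf : ∀ a b, IntervalIntegrable f volume a b) (hf0 : ∀ x, 0 ≤ f x) (hκ : κ ≤ 1)
    {n : ℕ} (hP : P.natDegree ≤ n) :
    ∃ K > 0, ∀ t, 1 ≤ log t → ∀ a b, 0 ≤ a → a ≤ b → 2 ≤ b → b ≤ 2 * t →
      ∫ u in a..b, f u ≤ K * log t ^ n * (b - a + b ^ (1 - κ)) := by
  set c := (∑ i ∈ Finset.range (n + 1), |P.coeff i|) +
    ∑ i ∈ Finset.range (n + 1), |P.derivative.coeff i|
  set M := (∫ u in (0:ℝ)..2, f u) + 2 * C₀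
  have hM : 0 ≤ M :=
    add_nonneg (integral_nonneg zero_le_two fun x _ => hf0 x) (by linarith [h.const_nonneg])
  refine ⟨c * 3 ^ n + M + 1, by positivity, fun t ht a b ha hab hb hbt => ?_⟩
  have hP' : P.derivative.natDegree ≤ n := P.natDegree_derivative_le.trans (by omega)
  have hD : ∀ x ∈ Icc 2 b, |P.eval (log x) + P.derivative.eval (log x)|
      ≤ c * 3 ^ n * log t ^ n := fun x hx => by
    have hx' : x ∈ Icc 1 (2 * t) := ⟨by linarith [hx.1], hx.2.trans hbt⟩
    have := add_le_add (P.abs_eval_log_le hP ht hx') (P.derivative.abs_eval_log_le hP' ht hx')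
    exact (abs_add_le _ _).trans (this.trans_eq (by ring))
  have hM' : M ≤ (c * 3 ^ n + M + 1) * log t ^ n :=
    calc M ≤ c * 3 ^ n + M + 1 := by linarith [show 0 ≤ c * 3 ^ n by positivity]
      _ ≤ _ := le_mul_of_one_le_right (by positivity) (one_le_pow₀ ht)
  calc ∫ u in a..b, f u ≤ c * 3 ^ n * log t ^ n * (b - a) + M * b ^ (1 - κ) :=
        h.integral_le hf hf0 hκ ha hab hb hD
    _ ≤ (c * 3 ^ n + M + 1) * log t ^ n * (b - a)
          + (c * 3 ^ n + M + 1) * log t ^ n * b ^ (1 - κ) := by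
        gcongr
        linarith
    _ = (c * 3 ^ n + M + 1) * log t ^ n * (b - a + b ^ (1 - κ)) := by ring

end HasMomentAsymptotic

theorem integral_mul_le_sqrt_integral_sq_mul_sqrt_integral_sq {f g : ℝ → ℝ} {a b : ℝ}
    (hab : a ≤ b) (hf : Continuous f) (hg : Continuous g) (hf0 : ∀ x, 0 ≤ f x)
    (hg0 : ∀ x, 0 ≤ g x) :
    ∫ x in a..b, f x * g x ≤ √(∫ x in a..b, f x ^ 2) * √(∫ x in a..b, g x ^ 2) := by
  have hL2 {h : ℝ → ℝ} (hh : Continuous h) :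
      MemLp h (ENNReal.ofReal 2) (volume.restrict (Ioc a b)) := by
    rw [ENNReal.ofReal_ofNat, memLp_two_iff_integrable_sq hh.aestronglyMeasurable]
    exact (hh.pow 2).integrableOn_Ioc
  have := integral_mul_le_Lp_mul_Lq_of_nonneg Real.HolderConjugate.two_two
    (Filter.Eventually.of_forall hf0) (Filter.Eventually.of_forall hg0) (hL2 hf) (hL2 hg)
  simp only [rpow_two, ← sqrt_eq_rpow] at this
  simpa only [integral_of_le hab] using this

theorem sqrt_mul_add_mul_sqrt_le {A s M : ℝ} (hA : 0 ≤ A) (hs : 0 ≤ s) (hM : 0 ≤ M) :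
    √(M * (A + 2 * s)) * √(M * (3 * A)) ≤ 3 * M * (A + √s * √A) := by
  rw [← sqrt_mul (by positivity), sqrt_le_iff]
  refine ⟨by positivity, ?_⟩
  have hsA : (√s * √A) ^ 2 = s * A := by rw [mul_pow, sq_sqrt hs, sq_sqrt hA]
  have hM2 : 0 ≤ M ^ 2 := sq_nonneg M
  nlinarith [mul_nonneg hM2 (mul_nonneg hA hA), mul_nonneg hM2 (mul_nonneg hs hA),
    mul_nonneg hM2 (mul_nonneg hA (by positivity : 0 ≤ √s * √A))]

theorem integral_reflect_sq_mul_sq_le {G : ℝ → ℝ} (hG : Continuous G) {κ M t A : ℝ}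
    (hκ : κ ∈ Icc 0 1) (hM : 0 ≤ M) (ht : 2 ≤ t) (hA : 1 ≤ A) (hAt : A ≤ t)
    (hmoment : ∀ a b, 0 ≤ a → a ≤ b → 2 ≤ b → b ≤ 2 * t →
      ∫ u in a..b, G u ^ 4 ≤ M * (b - a + b ^ (1 - κ))) :
    ∫ r in A..2 * A, G (2 * t - r) ^ 2 * G r ^ 2 ≤ 3 * M * (A + t ^ ((1 - κ) / 2) * √A) := by
  have hκ1 : 1 - κ ≤ 1 := by linarith [hκ.1]
  have hI₁ : ∫ r in A..2 * A, (G (2 * t - r) ^ 2) ^ 2 ≤ M * (A + 2 * t ^ (1 - κ)) := by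
    have hshift : (2 * t - A) ^ (1 - κ) ≤ 2 * t ^ (1 - κ) :=
      calc (2 * t - A) ^ (1 - κ) ≤ (2 * t) ^ (1 - κ) := by gcongr <;> linarith [hκ.2]
        _ = 2 ^ (1 - κ) * t ^ (1 - κ) := mul_rpow zero_le_two (by linarith)
        _ ≤ 2 * t ^ (1 - κ) := by
          gcongr; exact rpow_le_self_of_one_le one_le_two hκ1
    simp only [← pow_mul, Nat.reduceMul]
    rw [integral_comp_sub_left (fun u => G u ^ 4)]
    refine (hmoment _ _ (by linarith) (by linarith) (by linarith) (by linarith)).trans ?_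
    gcongr
    linarith
  have hI₂ : ∫ r in A..2 * A, (G r ^ 2) ^ 2 ≤ M * (3 * A) := by
    simp only [← pow_mul, Nat.reduceMul]
    refine (hmoment _ _ (by linarith) (by linarith) (by linarith) (by linarith)).trans ?_
    gcongr
    linarith [rpow_le_self_of_one_le (by linarith : 1 ≤ 2 * A) hκ1]
  calc _ ≤ √(∫ r in A..2 * A, (G (2 * t - r) ^ 2) ^ 2) * √(∫ r in A..2 * A, (G r ^ 2) ^ 2) :=
        integral_mul_le_sqrt_integral_sq_mul_sqrt_integral_sq (by linarith) (by fun_prop)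
          (by fun_prop) (fun r => by positivity) (fun r => by positivity)
    _ ≤ √(M * (A + 2 * t ^ (1 - κ))) * √(M * (3 * A)) := by gcongr
    _ ≤ 3 * M * (A + √(t ^ (1 - κ)) * √A) :=
        sqrt_mul_add_mul_sqrt_le (by linarith) (by positivity) hM
    _ = 3 * M * (A + t ^ ((1 - κ) / 2) * √A) := by
        rw [sqrt_eq_rpow, ← rpow_mul (by linarith)]
        ring_nf

theorem stmt7_general (κ : ℝ) (hκ : κ ∈ Set.Ioo (0:ℝ) 1) (P : Polynomial ℝ) (hP : P.degree = 4)
    (C₀ : ℝ)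
    (hmom : ∀ T : ℝ, 2 ≤ T →
      |(1 / T) * (∫ u in (0:ℝ)..T, ‖riemannZeta (1/2 + Complex.I * u)‖ ^ 4) -
          P.eval (Real.log T)| ≤ C₀ * T ^ (-κ)) :
    ∃ C > (0:ℝ), ∀ t : ℝ, 10 ≤ t → ∀ A : ℝ, 1 ≤ A → A ≤ t →
      (∫ r in A..(2 * A),
          ‖riemannZeta (1/2 + Complex.I * (2 * t - r))‖ ^ 2 *
            ‖riemannZeta (1/2 + Complex.I * r)‖ ^ 2) ≤
        C * (Real.log t) ^ 4 * (A + t ^ ((1 - κ) / 2) * Real.sqrt A) := by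
  set G : ℝ → ℝ := fun u => ‖riemannZeta (1 / 2 + Complex.I * u)‖ with hG_def
  have hG : Continuous G := continuous_norm_riemannZeta_critical_line
  obtain ⟨K, hK, hmoment⟩ := HasMomentAsymptotic.exists_integral_le (f := fun u => G u ^ 4) hmom
    (fun a b => (hG.pow 4).intervalIntegrable a b) (fun u => by positivity) hκ.2.le
    (Polynomial.natDegree_eq_of_degree_eq_some hP).le
  refine ⟨3 * K, by positivity, fun t ht A hA hAt => ?_⟩
  have hL : 1 ≤ log t := by
    rw [le_log_iff_exp_le (by linarith)]
    linarith [exp_one_lt_d9]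
  have hG_sub (r : ℝ) : ‖riemannZeta (1 / 2 + Complex.I * (2 * t - r))‖ = G (2 * t - r) := by
    simp only [hG_def, Complex.ofReal_sub, Complex.ofReal_mul, Complex.ofReal_ofNat]
  simp only [hG_sub]
  exact (integral_reflect_sq_mul_sq_le (M := K * log t ^ 4) hG (Ioo_subset_Icc_self hκ)
    (by positivity) (by linarith) hA hAt (hmoment t hL)).trans_eq (by ring)

theorem stmt7 (κ : ℝ) (hκ : κ ∈ Set.Ioo (0:ℝ) 1) (P : Polynomial ℝ) (hP : P.degree = 4)
    (C₀ : ℝ) (hC₀ : 0 < C₀)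
    (hmom : ∀ T : ℝ, 2 ≤ T →
      |(1 / T) * (∫ u in (0:ℝ)..T, ‖riemannZeta (1/2 + Complex.I * u)‖ ^ 4) -
          P.eval (Real.log T)| ≤ C₀ * T ^ (-κ)) :
    ∃ C > (0:ℝ), ∀ t : ℝ, 10 ≤ t → ∀ A : ℝ, 1 ≤ A → A ≤ t →
      (∫ r in A..(2 * A),
          ‖riemannZeta (1/2 + Complex.I * (2 * t - r))‖ ^ 2 *
            ‖riemannZeta (1/2 + Complex.I * r)‖ ^ 2) ≤
        C * (Real.log t) ^ 4 * (A + t ^ ((1 - κ) / 2) * Real.sqrt A) :=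
  stmt7_general κ hκ P hP C₀ hmom
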